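/- Let Γ be a real p×p matrix and μ ∈ R^p. Then μ^T Γ μ ≤ sqrt(μ^T (Γ Γ^T)^{1/2} μ) · sqrt(μ^T (Γ^T Γ)^{1/2} μ), where (·)^{1/2} denotes the positive semidefinite square root. -/

import Mathlib

open Matrix

noncomputable def Matrix.PosSemidef.sqrt {n 𝕜 : Type*} [Fintype n] [RCLike 𝕜] [DecidableEq n]
    [PartialOrder 𝕜] [StarOrderedRing 𝕜] {M : Matrix n n 𝕜} (hA : M.PosSemidef) : Matrix n n 𝕜 :=
  hA.1.eigenvectorUnitary.1 * diagonal ((↑) ∘ (Real.sqrt ∘ hA.1.eigenvalues)) *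
  (star hA.1.eigenvectorUnitary : Matrix n n 𝕜)

/-! Diagonalize `Γᵀ Γ = V D Vᵀ` and put `R = D^{1/4}`. The columns of `Γ V` are orthogonal with
squared norms `D`, so `Γ = P Qᵀ` with `Q = V R` and `P = Γ V R⁻¹`, and then `P Pᵀ`, `Q Qᵀ` are the
square roots of `Γ Γᵀ`, `Γᵀ Γ`. The inequality is Cauchy–Schwarz for `μᵀ Γ μ = ⟪Pᵀ μ, Qᵀ μ⟫`. -/

namespace Matrix

variable {m n k : Type*} [Fintype m] [Fintype n] [Fintype k]

theorem dotProduct_mul_transpose_mulVec {R : Type*} [CommSemiring R] (A : Matrix m k R)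
    (B : Matrix n k R) (u : m → R) (v : n → R) :
    u ⬝ᵥ ((A * Bᵀ) *ᵥ v) = (Aᵀ *ᵥ u) ⬝ᵥ (Bᵀ *ᵥ v) := by
  rw [← mulVec_mulVec, dotProduct_mulVec, ← mulVec_transpose]

theorem dotProduct_mul_transpose_mulVec_le (P : Matrix m k ℝ) (Q : Matrix n k ℝ)
    (x : m → ℝ) (y : n → ℝ) :
    x ⬝ᵥ ((P * Qᵀ) *ᵥ y) ≤ √(x ⬝ᵥ ((P * Pᵀ) *ᵥ x)) * √(y ⬝ᵥ ((Q * Qᵀ) *ᵥ y)) := by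
  simp only [dotProduct_mul_transpose_mulVec]
  simp only [dotProduct, ← sq]
  exact Real.sum_mul_le_sqrt_mul_sqrt _ _ _

variable [DecidableEq n]

open scoped MatrixOrder in
theorem PosSemidef.sqrt_eq_cfcSqrt {M : Matrix n n ℝ} (hM : M.PosSemidef) :
    hM.sqrt = CFC.sqrt M := by
  rw [CFC.sqrt_eq_cfc, cfc_nnreal_eq_real _ M, hM.1.cfc_eq]
  simp only [IsHermitian.cfc, PosSemidef.sqrt, Unitary.conjStarAlgAut_apply,
    Real.coe_sqrt, Real.coe_toNNReal']
  congr 3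
  funext i
  simp [max_eq_left (hM.eigenvalues_nonneg i)]

open scoped MatrixOrder in
theorem PosSemidef.sqrt_eq_of_mul_self {A M : Matrix n n ℝ} (hM : M.PosSemidef)
    (hA : A.PosSemidef) (h : A * A = M) : hM.sqrt = A := by
  rw [hM.sqrt_eq_cfcSqrt]
  exact CFC.sqrt_unique h hA.nonneg

theorem mul_diagonal_eq_self_of_transpose_mul_self_eq_diagonal {N : Matrix m n ℝ}
    {d w : n → ℝ} (hN : Nᵀ * N = diagonal d) (hw : ∀ i, d i ≠ 0 → w i = 1) :
    N * diagonal w = N := by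
  have hgram : Nᴴ * N * (1 - diagonal w) = 0 := by
    rw [conjTranspose_eq_transpose_of_trivial, hN, ← diagonal_one, diagonal_sub,
      diagonal_mul_diagonal, ← diagonal_zero]
    congr 1
    funext i
    by_cases hi : d i = 0 <;> simp [hi, hw]
  rw [conjTranspose_mul_self_mul_eq_zero, Matrix.mul_sub, Matrix.mul_one, sub_eq_zero] at hgram
  exact hgram.symm

theorem exists_mul_diagonal_eq_of_transpose_mul_self_eq_diagonal {N : Matrix m n ℝ}
    {d : n → ℝ} (hd : ∀ i, 0 ≤ d i) (hN : Nᵀ * N = diagonal d) :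
    ∃ (P : Matrix m n ℝ) (r : n → ℝ), P * diagonal r = N ∧ P * Pᵀ * (P * Pᵀ) = N * Nᵀ ∧
      ∀ i, r i * r i * (r i * r i) = d i := by
  set r : n → ℝ := fun i ↦ √√(d i)
  have hr4 (i : n) : r i * r i * (r i * r i) = d i := by
    simp only [r, Real.mul_self_sqrt (Real.sqrt_nonneg _), Real.mul_self_sqrt (hd i)]
  have hr0 (i : n) (hi : d i ≠ 0) : r i ≠ 0 := fun h ↦ hi (by rw [← hr4 i, h]; ring)
  -- `r⁻¹` takes the junk value `0` exactly where `d` vanishes, and so do those columns of `N`.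
  refine ⟨N * diagonal r⁻¹, r, ?_, ?_, hr4⟩
  · rw [Matrix.mul_assoc, diagonal_mul_diagonal]
    exact mul_diagonal_eq_self_of_transpose_mul_self_eq_diagonal hN fun i hi ↦
      inv_mul_cancel₀ (hr0 i hi)
  · calc _ = N * (diagonal r⁻¹ * diagonal r⁻¹ * (Nᵀ * N) * (diagonal r⁻¹ * diagonal r⁻¹)) * Nᵀ :=
          by simp only [transpose_mul, diagonal_transpose, Matrix.mul_assoc]
      _ = N * diagonal (fun i ↦ (r i)⁻¹ * (r i)⁻¹ * d i * ((r i)⁻¹ * (r i)⁻¹)) * Nᵀ := by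
          simp only [hN, diagonal_mul_diagonal, Pi.inv_apply]
      _ = N * Nᵀ := by
        rw [mul_diagonal_eq_self_of_transpose_mul_self_eq_diagonal hN fun i hi ↦ ?_]
        rw [← hr4 i]; field_simp [hr0 i hi]

theorem exists_balanced_factorization (Γ : Matrix m n ℝ) :
    ∃ (P : Matrix m n ℝ) (Q : Matrix n n ℝ),
      P * Qᵀ = Γ ∧ P * Pᵀ * (P * Pᵀ) = Γ * Γᵀ ∧ Q * Qᵀ * (Q * Qᵀ) = Γᵀ * Γ := by
  have hpsd : (Γᵀ * Γ).PosSemidef := by simpa using posSemidef_conjTranspose_mul_self Γ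
  set hΓ := hpsd.isHermitian
  set V : Matrix n n ℝ := hΓ.eigenvectorUnitary.1
  set d := hΓ.eigenvalues
  have hVV : Vᵀ * V = 1 := by
    simpa [V, star_eq_conjTranspose] using Unitary.coe_star_mul_self hΓ.eigenvectorUnitary
  have hVV' : V * Vᵀ = 1 := by
    simpa [V, star_eq_conjTranspose] using Unitary.coe_mul_star_self hΓ.eigenvectorUnitary
  have hspec : Γᵀ * Γ = V * diagonal d * Vᵀ := by
    simpa [V, d, Unitary.conjStarAlgAut_apply, star_eq_conjTranspose] using hΓ.spectral_theorem
  have hN : (Γ * V)ᵀ * (Γ * V) = diagonal d := by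
    calc _ = Vᵀ * (Γᵀ * Γ) * V := by simp only [transpose_mul, Matrix.mul_assoc]
      _ = Vᵀ * V * diagonal d * (Vᵀ * V) := by simp only [hspec, Matrix.mul_assoc]
      _ = diagonal d := by rw [hVV, Matrix.one_mul, Matrix.mul_one]
  obtain ⟨P, r, hPr, hP, hr⟩ := exists_mul_diagonal_eq_of_transpose_mul_self_eq_diagonal
    (d := d) hpsd.eigenvalues_nonneg hN
  refine ⟨P, V * diagonal r, ?_, ?_, ?_⟩
  · rw [transpose_mul, diagonal_transpose, ← Matrix.mul_assoc, hPr, Matrix.mul_assoc, hVV',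
      Matrix.mul_one]
  · rw [hP, transpose_mul, Matrix.mul_assoc, ← Matrix.mul_assoc V, hVV', Matrix.one_mul]
  · calc _ = V * (diagonal r * diagonal r * (Vᵀ * V) * (diagonal r * diagonal r)) * Vᵀ := by
          simp only [transpose_mul, diagonal_transpose, Matrix.mul_assoc]
      _ = Γᵀ * Γ := by simp only [hVV, Matrix.mul_one, diagonal_mul_diagonal, hr, hspec]

end Matrix

/-- Cauchy–Schwarz-type bound
`μᵀ Γ μ ≤ sqrt(μᵀ (ΓΓᵀ)^{1/2} μ) * sqrt(μᵀ (ΓᵀΓ)^{1/2} μ)`. -/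
theorem stmt9 {p : ℕ} (Γ : Matrix (Fin p) (Fin p) ℝ) (μ : Fin p → ℝ)
    (h1 : (Γ * Γᵀ).PosSemidef) (h2 : (Γᵀ * Γ).PosSemidef) :
    μ ⬝ᵥ (Γ *ᵥ μ) ≤
      Real.sqrt (μ ⬝ᵥ (h1.sqrt *ᵥ μ)) * Real.sqrt (μ ⬝ᵥ (h2.sqrt *ᵥ μ)) := by
  obtain ⟨P, Q, hΓ, hP, hQ⟩ := exists_balanced_factorization Γ
  rw [h1.sqrt_eq_of_mul_self (by simpa using posSemidef_self_mul_conjTranspose P) hP,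
    h2.sqrt_eq_of_mul_self (by simpa using posSemidef_self_mul_conjTranspose Q) hQ, ← hΓ]
  exact dotProduct_mul_transpose_mulVec_le P Q μ μ
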